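/- Let σ ≥ 1. There is a constant C depending only on σ such that for all z ∈ ℂ and all w ∈ ℂ with w ≠ 0: |F(z,w)| ≤ C(|z|^(2σ+1) + |z|²|w|^(2σ−1)). Moreover, if z, w : ℝ → ℂ are differentiable with w(x) ≠ 0 for all x, then |d/dx F(z(x), w(x))| ≤ C(|z(x)|^(2σ) + |z(x)||w(x)|^(2σ−1))|z'(x)| + C(|z(x)|^(2σ+1)|w(x)|^(−1) + |z(x)|²|w(x)|^(2σ−2))|w'(x)| for all x. -/

import Mathlib

/-!
With `g u = |u|^(2σ) u`, `F(z, w) = -(g (z + w) - g w - Dg(w) z)` is minus the first-order Taylor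
remainder of `g` at `w`. By the chain rule and the symmetry of `D²g`,
`d/dx F(z, w) = -(Dg(z + w) - Dg(w)) z' - R(z, w) w'`, where `R` is the first-order Taylor
remainder of `Dg`.

The function `g` and its Wirtinger derivatives are polar monomials `c |u|^q uⁿ ūᵐ`, a class closed
under `∂` and `∂̄` whose members are homogeneous of degree `q + n + m`. For `|z| ≤ |w|/2` the mean
value theorem bounds differences and Taylor remainders of a polar monomial by `|z|` or `|z|²` times
the matching power of `|w|`; for `|z| > |w|/2` every term is bounded by a power of `|z|` alone.
-/

noncomputable section

open Real Complex

/-- The nonlinear remainder of the NLS nonlinearity after linearization about `w`: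
`F(z,w) = −|z+w|^(2σ)(z+w) + |w|^(2σ)w + (σ+1)|w|^(2σ)z + σ|w|^(2σ−2)w² conj(z)`. -/
def Fnl (σ : ℝ) (z w : ℂ) : ℂ :=
  -((‖z + w‖ ^ (2 * σ) : ℝ) : ℂ) * (z + w)
    + ((‖w‖ ^ (2 * σ) : ℝ) : ℂ) * w
    + ((σ : ℂ) + 1) * ((‖w‖ ^ (2 * σ) : ℝ) : ℂ) * z
    + (σ : ℂ) * ((‖w‖ ^ (2 * σ - 2) : ℝ) : ℂ) * w ^ 2 * starRingEnd ℂ z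

open scoped ComplexConjugate

lemma rpow_le_two_rpow_abs_mul_rpow {x y : ℝ} (hx : 0 < x) (h₁ : x / 2 ≤ y) (h₂ : y ≤ 2 * x)
    (e : ℝ) : y ^ e ≤ 2 ^ |e| * x ^ e := by
  rcases le_or_gt 0 e with he | he
  · calc y ^ e ≤ (2 * x) ^ e := Real.rpow_le_rpow (by linarith) h₂ he
      _ = 2 ^ e * x ^ e := Real.mul_rpow (by norm_num) hx.le
      _ ≤ 2 ^ |e| * x ^ e :=
        mul_le_mul_of_nonneg_right (Real.rpow_le_rpow_of_exponent_le (by norm_num) (le_abs_self e))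
          (by positivity)
  · calc y ^ e ≤ (x / 2) ^ e := Real.rpow_le_rpow_of_nonpos (by positivity) h₁ he.le
      _ = 2 ^ |e| * x ^ e := by
        rw [Real.div_rpow hx.le (by norm_num), abs_of_neg he, Real.rpow_neg (by norm_num)]
        ring

lemma rpow_sub_one_le_add_of_three_le {x y e : ℝ} (hx : 0 ≤ x) (hy : 0 < y) (he : 3 ≤ e) :
    x ^ (e - 1) ≤ x ^ e * y ^ (-1 : ℝ) + x ^ 2 * y ^ (e - 3) := by
  rcases le_or_gt x y with hxy | hxy
  · have hsplit : x ^ (e - 1) = x ^ 2 * x ^ (e - 3) := by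
      rw [← Real.rpow_natCast, ← Real.rpow_add' hx (by norm_num; linarith)]; ring_nf
    calc x ^ (e - 1) = x ^ 2 * x ^ (e - 3) := hsplit
      _ ≤ x ^ 2 * y ^ (e - 3) := by gcongr
      _ ≤ _ := le_add_of_nonneg_left (by positivity)
  · have hx0 : 0 < x := hy.trans hxy
    calc x ^ (e - 1) = x ^ e / x := Real.rpow_sub_one hx0.ne' e
      _ ≤ x ^ e / y := by gcongr
      _ = x ^ e * y ^ (-1 : ℝ) := by rw [Real.rpow_neg_one, div_eq_mul_inv]
      _ ≤ _ := le_add_of_nonneg_right (by positivity)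

lemma le_add_mul_add_of_or {r K₁ K₂ A B : ℝ} (hK₁ : 0 ≤ K₁) (hK₂ : 0 ≤ K₂) (hA : 0 ≤ A)
    (hB : 0 ≤ B) (h : r ≤ K₁ * A ∨ r ≤ K₂ * B) : r ≤ (K₁ + K₂) * (A + B) := by
  rcases h with h | h <;> nlinarith

lemma norm_bounds_of_norm_sub_le_half {E : Type*} [SeminormedAddCommGroup E] {u w : E}
    (hu : ‖u - w‖ ≤ ‖w‖ / 2) :
    ‖w‖ / 2 ≤ ‖u‖ ∧ ‖u‖ ≤ 2 * ‖w‖ := by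
  have h₁ := norm_sub_norm_le w u
  have h₂ := norm_le_norm_add_norm_sub' u w
  rw [norm_sub_rev] at h₁
  constructor <;> linarith [norm_nonneg w]

/-- The `ℝ`-linear map `ℂ → ℂ` with Wirtinger derivatives `∂ = a` and `∂̄ = b`. -/
def wirtingerCLM (a b : ℂ) : ℂ →L[ℝ] ℂ :=
  a • ContinuousLinearMap.id ℝ ℂ + b • conjCLE.toContinuousLinearMap

@[simp]
lemma wirtingerCLM_apply (a b h : ℂ) : wirtingerCLM a b h = a * h + b * conj h := by
  simp [wirtingerCLM]

lemma wirtingerCLM_sub (a b a' b' : ℂ) :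
    wirtingerCLM a b - wirtingerCLM a' b' = wirtingerCLM (a - a') (b - b') := by
  ext h; simp; ring

lemma norm_wirtingerCLM_le (a b : ℂ) : ‖wirtingerCLM a b‖ ≤ ‖a‖ + ‖b‖ :=
  ContinuousLinearMap.opNorm_le_bound _ (by positivity) fun h => by
    simpa [add_mul] using norm_add_le (a * h) (b * conj h)

lemma HasFDerivAt.mul_wirtingerCLM {f g : ℂ → ℂ} {u a b a' b' : ℂ}
    (hf : HasFDerivAt f (wirtingerCLM a b) u) (hg : HasFDerivAt g (wirtingerCLM a' b') u) :
    HasFDerivAt (fun v => f v * g v)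
      (wirtingerCLM (f u * a' + g u * a) (f u * b' + g u * b)) u :=
  (hf.mul hg).congr_fderiv <| by ext h; simp; ring

lemma hasFDerivAt_ofReal_norm_rpow (q : ℝ) {u : ℂ} (hu : u ≠ 0) :
    HasFDerivAt (fun v : ℂ => ((‖v‖ ^ q : ℝ) : ℂ))
      (wirtingerCLM (q / 2 * (‖u‖ ^ (q - 2) : ℝ) * conj u) (q / 2 * (‖u‖ ^ (q - 2) : ℝ) * u))
      u := by
  have hu' : (0 : ℝ) < ‖u‖ ^ 2 := by positivity
  have hpow : ∀ v : ℂ, ‖v‖ ^ q = (‖v‖ ^ 2) ^ (q / 2) := fun v => by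
    rw [← Real.rpow_natCast_mul (norm_nonneg v)]; ring_nf
  have h := ofRealCLM.hasFDerivAt.comp u
    ((Real.hasDerivAt_rpow_const (p := q / 2) (Or.inl hu'.ne')).comp_hasFDerivAt u
      (hasStrictFDerivAt_norm_sq u).hasFDerivAt)
  rw [show (fun v : ℂ => ((‖v‖ ^ q : ℝ) : ℂ)) = _ from funext fun v => congrArg ofReal (hpow v)]
  refine h.congr_fderiv ?_
  have hexp : (‖u‖ ^ 2) ^ (q / 2 - 1) = ‖u‖ ^ (q - 2) := by
    rw [← Real.rpow_natCast_mul (norm_nonneg u)]; ring_nf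
  ext h; apply Complex.ext <;> simp [hexp, Complex.inner] <;> ring

lemma hasFDerivAt_zpow_wirtingerCLM (n : ℤ) {u : ℂ} (hu : u ≠ 0) :
    HasFDerivAt (fun v : ℂ => v ^ n) (wirtingerCLM (n * u ^ (n - 1)) 0) u :=
  ((hasDerivAt_zpow n u (Or.inl hu)).hasFDerivAt.restrictScalars ℝ).congr_fderiv <| by
    ext h; simp; ring

lemma hasFDerivAt_conj_zpow_wirtingerCLM (m : ℤ) {u : ℂ} (hu : u ≠ 0) :
    HasFDerivAt (fun v : ℂ => conj v ^ m) (wirtingerCLM 0 (m * conj u ^ (m - 1))) u := by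
  have h := (conjCLE.toContinuousLinearMap.hasFDerivAt (x := u ^ m)).comp u
    (hasFDerivAt_zpow_wirtingerCLM m hu)
  simp only [Function.comp_def] at h
  refine (h.congr_fderiv ?_).congr_of_eventuallyEq (Filter.Eventually.of_forall fun v => ?_)
  · ext h; simp
  · simp [map_zpow₀]

@[ext]
structure PolarMonomial where
  coeff : ℂ
  q : ℝ
  n : ℤ
  m : ℤ

namespace PolarMonomial

variable (P : PolarMonomial)

@[coe]
def toFun (v : ℂ) : ℂ := P.coeff * ((‖v‖ ^ P.q : ℝ) : ℂ) * v ^ P.n * conj v ^ P.m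

instance : CoeFun PolarMonomial fun _ => ℂ → ℂ := ⟨toFun⟩

lemma apply (v : ℂ) : P v = P.coeff * ((‖v‖ ^ P.q : ℝ) : ℂ) * v ^ P.n * conj v ^ P.m := rfl

def deg : ℝ := P.q + P.n + P.m

def dz : PolarMonomial := ⟨P.coeff * (P.q / 2 + P.n), P.q, P.n - 1, P.m⟩

def dzbar : PolarMonomial := ⟨P.coeff * (P.q / 2 + P.m), P.q, P.n, P.m - 1⟩

def fderiv (u : ℂ) : ℂ →L[ℝ] ℂ := wirtingerCLM (P.dz u) (P.dzbar u)

def remainder (z w : ℂ) : ℂ := P (z + w) - P w - P.fderiv w z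

lemma deg_dz : P.dz.deg = P.deg - 1 := by simp [deg, dz]; ring

lemma deg_dzbar : P.dzbar.deg = P.deg - 1 := by simp [deg, dzbar]; ring

lemma dz_dzbar : P.dz.dzbar = P.dzbar.dz := by
  ext <;> simp [dz, dzbar]; ring

lemma apply_zero {P : PolarMonomial} (hq : P.q ≠ 0) : P 0 = 0 := by
  simp [apply, Real.zero_rpow hq]

lemma norm_apply {u : ℂ} (hu : u ≠ 0) : ‖P u‖ = ‖P.coeff‖ * ‖u‖ ^ P.deg := by
  have hu' : 0 < ‖u‖ := norm_pos_iff.2 hu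
  rw [apply, deg, Real.rpow_add hu', Real.rpow_add hu', Real.rpow_intCast, Real.rpow_intCast]
  simp [abs_of_nonneg (Real.rpow_nonneg hu'.le _)]
  ring

lemma norm_apply_le {P : PolarMonomial} (hq : P.q ≠ 0) (u : ℂ) :
    ‖P u‖ ≤ ‖P.coeff‖ * ‖u‖ ^ P.deg := by
  rcases eq_or_ne u 0 with rfl | hu
  · rw [apply_zero hq, norm_zero]; positivity
  · exact (P.norm_apply hu).le

lemma norm_fderiv_le {u : ℂ} (hu : u ≠ 0) :
    ‖P.fderiv u‖ ≤ (‖P.dz.coeff‖ + ‖P.dzbar.coeff‖) * ‖u‖ ^ (P.deg - 1) := by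
  refine (norm_wirtingerCLM_le _ _).trans_eq ?_
  rw [norm_apply _ hu, norm_apply _ hu, deg_dz, deg_dzbar]
  ring

lemma ofReal_norm_rpow_sub_two_mul_mul_conj (q : ℝ) {u : ℂ} (hu : u ≠ 0) :
    ((‖u‖ ^ (q - 2) : ℝ) : ℂ) * (u * conj u) = ((‖u‖ ^ q : ℝ) : ℂ) := by
  rw [mul_conj, normSq_eq_norm_sq, ← ofReal_mul, ← Real.rpow_natCast,
    ← Real.rpow_add (norm_pos_iff.2 hu)]
  norm_num

theorem hasFDerivAt {u : ℂ} (hu : u ≠ 0) : HasFDerivAt P (P.fderiv u) u := by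
  have h := (((hasFDerivAt_ofReal_norm_rpow P.q hu).mul_wirtingerCLM
    (hasFDerivAt_zpow_wirtingerCLM P.n hu)).mul_wirtingerCLM
    (hasFDerivAt_conj_zpow_wirtingerCLM P.m hu)).const_mul P.coeff
  refine (h.congr_fderiv ?_).congr_of_eventuallyEq (.of_forall fun v => by rw [apply]; ring)
  have key := ofReal_norm_rpow_sub_two_mul_mul_conj P.q hu
  have hn : u ^ P.n = u ^ (P.n - 1) * u := by rw [zpow_sub_one₀ hu, inv_mul_cancel_right₀ hu]
  have hu' : conj u ≠ 0 := by simpa using hu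
  have hm : conj u ^ P.m = conj u ^ (P.m - 1) * conj u := by
    rw [zpow_sub_one₀ hu', inv_mul_cancel_right₀ hu']
  ext h
  simp only [fderiv, dz, dzbar, apply, FunLike.coe_smul, Pi.smul_apply, wirtingerCLM_apply,
    smul_eq_mul]
  linear_combination (P.coeff * P.q / 2 * h) * (conj u ^ P.m * (‖u‖ ^ (P.q - 2) : ℝ) * conj u * hn
      + conj u ^ P.m * u ^ (P.n - 1) * key)
    + (P.coeff * P.q / 2 * conj h) * (u ^ P.n * (‖u‖ ^ (P.q - 2) : ℝ) * u * hm
      + u ^ P.n * conj u ^ (P.m - 1) * key)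

theorem hasFDerivAt_zero {P : PolarMonomial} (hq : P.q ≠ 0) (hd : 1 < P.deg) :
    HasFDerivAt P (P.fderiv 0) 0 := by
  have hD : P.fderiv 0 = 0 := by
    ext h; simp [fderiv, apply_zero (P := P.dz) hq, apply_zero (P := P.dzbar) hq]
  rw [hD, hasFDerivAt_iff_isLittleO_nhds_zero, Asymptotics.isLittleO_iff]
  intro ε hε
  have hlim : Filter.Tendsto (fun h : ℂ => ‖P.coeff‖ * ‖h‖ ^ (P.deg - 1)) (nhds 0) (nhds 0) := by
    have : ContinuousAt (fun t : ℝ => ‖P.coeff‖ * t ^ (P.deg - 1)) 0 :=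
      continuousAt_const.mul (Real.continuousAt_rpow_const _ _ (Or.inr (by linarith)))
    simpa [Function.comp_def, Real.zero_rpow (by linarith : P.deg - 1 ≠ 0)] using
      this.tendsto.comp (continuous_norm.tendsto' (0 : ℂ) 0 norm_zero)
  filter_upwards [hlim.eventually_le_const hε] with h hh
  rcases eq_or_ne h 0 with rfl | h0
  · simp
  have hsplit : ‖h‖ ^ P.deg = ‖h‖ ^ (P.deg - 1) * ‖h‖ := by
    rw [Real.rpow_sub_one (norm_ne_zero_iff.2 h0), div_mul_cancel₀ _ (norm_ne_zero_iff.2 h0)]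
  simp only [zero_add, apply_zero hq, sub_zero, zero_apply]
  rw [norm_apply _ h0, hsplit, ← mul_assoc]
  exact mul_le_mul_of_nonneg_right hh (norm_nonneg h)

theorem hasFDerivAt_of_one_lt_deg {P : PolarMonomial} (hq : P.q ≠ 0) (hd : 1 < P.deg) (u : ℂ) :
    HasFDerivAt P (P.fderiv u) u := by
  rcases eq_or_ne u 0 with rfl | hu
  · exact hasFDerivAt_zero hq hd
  · exact P.hasFDerivAt hu

theorem exists_norm_sub_le_near :
    ∃ K, 0 ≤ K ∧ ∀ w u : ℂ, w ≠ 0 → ‖u - w‖ ≤ ‖w‖ / 2 →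
      ‖P u - P w‖ ≤ K * ‖w‖ ^ (P.deg - 1) * ‖u - w‖ := by
  refine ⟨(‖P.dz.coeff‖ + ‖P.dzbar.coeff‖) * 2 ^ |P.deg - 1|, by positivity, fun w u hw hu => ?_⟩
  have hw' : 0 < ‖w‖ := norm_pos_iff.2 hw
  have hball : ∀ v ∈ Metric.closedBall w (‖w‖ / 2), v ≠ 0 ∧
      ‖P.fderiv v‖ ≤ (‖P.dz.coeff‖ + ‖P.dzbar.coeff‖) * 2 ^ |P.deg - 1| * ‖w‖ ^ (P.deg - 1) := by
    intro v hv
    rw [Metric.mem_closedBall, dist_eq_norm] at hv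
    obtain ⟨hv₁, hv₂⟩ := norm_bounds_of_norm_sub_le_half hv
    have hv0 : v ≠ 0 := norm_pos_iff.1 (by linarith)
    refine ⟨hv0, (P.norm_fderiv_le hv0).trans ?_⟩
    rw [mul_assoc]
    gcongr
    exact rpow_le_two_rpow_abs_mul_rpow hw' hv₁ hv₂ _
  exact (convex_closedBall w _).norm_image_sub_le_of_norm_hasFDerivWithin_le
    (fun v hv => (P.hasFDerivAt (hball v hv).1).hasFDerivWithinAt) (fun v hv => (hball v hv).2)
    (Metric.mem_closedBall_self (by positivity)) (by rwa [Metric.mem_closedBall, dist_eq_norm])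

theorem exists_norm_remainder_le_near :
    ∃ K, 0 ≤ K ∧ ∀ z w : ℂ, w ≠ 0 → ‖z‖ ≤ ‖w‖ / 2 →
      ‖P.remainder z w‖ ≤ K * ‖w‖ ^ (P.deg - 2) * ‖z‖ ^ 2 := by
  obtain ⟨K₁, hK₁, h₁⟩ := P.dz.exists_norm_sub_le_near
  obtain ⟨K₂, hK₂, h₂⟩ := P.dzbar.exists_norm_sub_le_near
  refine ⟨K₁ + K₂, by positivity, fun z w hw hz => ?_⟩
  rw [deg_dz, sub_sub, one_add_one_eq_two] at h₁
  rw [deg_dzbar, sub_sub, one_add_one_eq_two] at h₂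
  have hball : ∀ v ∈ Metric.closedBall w ‖z‖, v ≠ 0 ∧
      ‖P.fderiv v - P.fderiv w‖ ≤ (K₁ + K₂) * ‖w‖ ^ (P.deg - 2) * ‖z‖ := by
    intro v hv
    rw [Metric.mem_closedBall, dist_eq_norm] at hv
    have hvw : ‖v - w‖ ≤ ‖w‖ / 2 := hv.trans hz
    have hv0 : v ≠ 0 :=
      norm_pos_iff.1 (by linarith [(norm_bounds_of_norm_sub_le_half hvw).1, norm_pos_iff.2 hw])
    refine ⟨hv0, ?_⟩
    rw [fderiv, fderiv, wirtingerCLM_sub]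
    refine (norm_wirtingerCLM_le _ _).trans ?_
    calc _ ≤ (K₁ + K₂) * ‖w‖ ^ (P.deg - 2) * ‖v - w‖ := by
          linarith [h₁ w v hw hvw, h₂ w v hw hvw]
      _ ≤ _ := by gcongr
  have h := (convex_closedBall w ‖z‖).norm_image_sub_le_of_norm_hasFDerivWithin_le'
    (fun v hv => (P.hasFDerivAt (hball v hv).1).hasFDerivWithinAt) (fun v hv => (hball v hv).2)
    (Metric.mem_closedBall_self (norm_nonneg z)) (y := z + w) (by simp [dist_eq_norm])
  rw [add_sub_cancel_right] at h
  rw [remainder, sq, ← mul_assoc]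
  exact h

lemma norm_apply_add_add_norm_apply_le {P : PolarMonomial} (hq : P.q ≠ 0) (hd : 0 ≤ P.deg)
    {z w : ℂ} (hzw : ‖w‖ ≤ 2 * ‖z‖) :
    ‖P (z + w)‖ + ‖P w‖ ≤ ‖P.coeff‖ * (3 ^ P.deg + 2 ^ P.deg) * ‖z‖ ^ P.deg := by
  have h₃ : ‖z + w‖ ^ P.deg ≤ 3 ^ P.deg * ‖z‖ ^ P.deg :=
    (Real.rpow_le_rpow (norm_nonneg _) (by linarith [norm_add_le z w]) hd).trans_eq
      (Real.mul_rpow (by norm_num) (norm_nonneg z))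
  have h₂ : ‖w‖ ^ P.deg ≤ 2 ^ P.deg * ‖z‖ ^ P.deg :=
    (Real.rpow_le_rpow (norm_nonneg _) hzw hd).trans_eq
      (Real.mul_rpow (by norm_num) (norm_nonneg z))
  calc ‖P (z + w)‖ + ‖P w‖ ≤ ‖P.coeff‖ * ‖z + w‖ ^ P.deg + ‖P.coeff‖ * ‖w‖ ^ P.deg :=
        add_le_add (norm_apply_le hq _) (norm_apply_le hq _)
    _ ≤ ‖P.coeff‖ * (3 ^ P.deg * ‖z‖ ^ P.deg) + ‖P.coeff‖ * (2 ^ P.deg * ‖z‖ ^ P.deg) := by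
        gcongr
    _ = _ := by ring

theorem exists_norm_sub_le {P : PolarMonomial} (hq : P.q ≠ 0) (hd : 0 ≤ P.deg) :
    ∃ K, 0 ≤ K ∧ ∀ z w : ℂ, w ≠ 0 →
      ‖P (z + w) - P w‖ ≤ K * (‖z‖ ^ P.deg + ‖z‖ * ‖w‖ ^ (P.deg - 1)) := by
  obtain ⟨K, hK, hnear⟩ := P.exists_norm_sub_le_near
  refine ⟨‖P.coeff‖ * (3 ^ P.deg + 2 ^ P.deg) + K, by positivity, fun z w hw =>
    le_add_mul_add_of_or (by positivity) hK (by positivity) (by positivity) ?_⟩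
  rcases le_or_gt ‖z‖ (‖w‖ / 2) with hz | hz
  · right
    have h := hnear w (z + w) hw (by rwa [add_sub_cancel_right])
    rw [add_sub_cancel_right] at h
    exact h.trans_eq (by ring)
  · left
    exact (norm_sub_le _ _).trans (norm_apply_add_add_norm_apply_le hq hd (by linarith))

theorem exists_norm_remainder_le {P : PolarMonomial} (hq : P.q ≠ 0) (hd : 1 ≤ P.deg) :
    ∃ K, 0 ≤ K ∧ ∀ z w : ℂ, w ≠ 0 →
      ‖P.remainder z w‖ ≤ K * (‖z‖ ^ P.deg + ‖z‖ ^ 2 * ‖w‖ ^ (P.deg - 2)) := by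
  obtain ⟨K, hK, hnear⟩ := P.exists_norm_remainder_le_near
  set M := ‖P.dz.coeff‖ + ‖P.dzbar.coeff‖
  refine ⟨‖P.coeff‖ * (3 ^ P.deg + 2 ^ P.deg) + M * 2 ^ (P.deg - 1) + K, by positivity,
    fun z w hw => le_add_mul_add_of_or (by positivity) hK (by positivity) (by positivity) ?_⟩
  rcases le_or_gt ‖z‖ (‖w‖ / 2) with hz | hz
  · right
    exact (hnear z w hw hz).trans_eq (by ring)
  · left
    have hz0 : ‖z‖ ≠ 0 := by linarith [norm_nonneg w]
    have hlin : ‖P.fderiv w z‖ ≤ M * 2 ^ (P.deg - 1) * ‖z‖ ^ P.deg := calc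
      ‖P.fderiv w z‖ ≤ M * ‖w‖ ^ (P.deg - 1) * ‖z‖ :=
          (P.fderiv w).le_of_opNorm_le (P.norm_fderiv_le hw) z
      _ ≤ M * (2 ^ (P.deg - 1) * ‖z‖ ^ (P.deg - 1)) * ‖z‖ := by
          gcongr
          exact (Real.rpow_le_rpow (norm_nonneg _) (by linarith) (by linarith)).trans_eq
            (Real.mul_rpow (by norm_num) (norm_nonneg z))
      _ = M * 2 ^ (P.deg - 1) * ‖z‖ ^ P.deg := by
          rw [Real.rpow_sub_one hz0]; field_simp
    calc ‖P.remainder z w‖ ≤ ‖P (z + w)‖ + ‖P w‖ + ‖P.fderiv w z‖ :=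
          (norm_sub_le _ _).trans (add_le_add_left (norm_sub_le _ _) _)
      _ ≤ _ := by
          linarith [norm_apply_add_add_norm_apply_le hq (by linarith) (by linarith : ‖w‖ ≤ 2 * ‖z‖)]

theorem exists_norm_fderiv_sub_le {P : PolarMonomial} (hq : P.q ≠ 0) (hd : 1 ≤ P.deg) :
    ∃ K, 0 ≤ K ∧ ∀ z w : ℂ, w ≠ 0 →
      ‖P.fderiv (z + w) - P.fderiv w‖ ≤ K * (‖z‖ ^ (P.deg - 1) + ‖z‖ * ‖w‖ ^ (P.deg - 2)) := by
  obtain ⟨K₁, hK₁, h₁⟩ := exists_norm_sub_le (P := P.dz) hq (by rw [deg_dz]; linarith)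
  obtain ⟨K₂, hK₂, h₂⟩ := exists_norm_sub_le (P := P.dzbar) hq (by rw [deg_dzbar]; linarith)
  rw [deg_dz, sub_sub, one_add_one_eq_two] at h₁
  rw [deg_dzbar, sub_sub, one_add_one_eq_two] at h₂
  refine ⟨K₁ + K₂, by positivity, fun z w hw => ?_⟩
  rw [fderiv, fderiv, wirtingerCLM_sub]
  refine (norm_wirtingerCLM_le _ _).trans ?_
  linarith [h₁ z w hw, h₂ z w hw]

theorem exists_norm_remainder_dz_add_le {P : PolarMonomial} (hq : P.q ≠ 0) (hd : 3 ≤ P.deg) :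
    ∃ K, 0 ≤ K ∧ ∀ z w : ℂ, w ≠ 0 →
      ‖P.dz.remainder z w‖ + ‖P.dzbar.remainder z w‖
        ≤ K * (‖z‖ ^ P.deg * ‖w‖ ^ (-1 : ℝ) + ‖z‖ ^ 2 * ‖w‖ ^ (P.deg - 3)) := by
  obtain ⟨K₁, hK₁, h₁⟩ := exists_norm_remainder_le (P := P.dz) hq (by rw [deg_dz]; linarith)
  obtain ⟨K₂, hK₂, h₂⟩ := exists_norm_remainder_le (P := P.dzbar) hq (by rw [deg_dzbar]; linarith)
  rw [deg_dz, show P.deg - 1 - 2 = P.deg - 3 by ring] at h₁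
  rw [deg_dzbar, show P.deg - 1 - 2 = P.deg - 3 by ring] at h₂
  refine ⟨2 * (K₁ + K₂), by positivity, fun z w hw => ?_⟩
  have hw' : 0 < ‖w‖ := norm_pos_iff.2 hw
  have h := rpow_sub_one_le_add_of_three_le (norm_nonneg z) hw' hd
  have : 0 ≤ ‖z‖ ^ P.deg * ‖w‖ ^ (-1 : ℝ) := by positivity
  calc _ ≤ (K₁ + K₂) * (‖z‖ ^ (P.deg - 1) + ‖z‖ ^ 2 * ‖w‖ ^ (P.deg - 3)) := by
        linarith [h₁ z w hw, h₂ z w hw]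
    _ ≤ (K₁ + K₂) * (2 * (‖z‖ ^ P.deg * ‖w‖ ^ (-1 : ℝ) + ‖z‖ ^ 2 * ‖w‖ ^ (P.deg - 3))) := by
        gcongr; linarith
    _ = _ := by ring

theorem hasDerivAt_remainder_comp {z w : ℝ → ℂ} {z' w' : ℂ} {x : ℝ} (hz : HasDerivAt z z' x)
    (hw : HasDerivAt w w' x) (hw0 : w x ≠ 0)
    (hzw : HasFDerivAt P (P.fderiv (z x + w x)) (z x + w x)) :
    HasDerivAt (fun y => P.remainder (z y) (w y))
      ((P.fderiv (z x + w x) - P.fderiv (w x)) z'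
        + wirtingerCLM (P.dz.remainder (z x) (w x)) (P.dzbar.remainder (z x) (w x)) w') x := by
  refine (((hzw.comp_hasDerivAt x (hz.add hw)).sub ((P.hasFDerivAt hw0).comp_hasDerivAt x hw)).sub
    ((((P.dz.hasFDerivAt hw0).comp_hasDerivAt x hw).mul hz).add
      (((P.dzbar.hasFDerivAt hw0).comp_hasDerivAt x hw).mul hz.star))).congr_deriv ?_
  -- `∂∂̄P = ∂̄∂P` regroups the `w'`- and `conj w'`-terms into remainders of `∂P` and `∂̄P`.
  simp only [remainder, fderiv, sub_apply, wirtingerCLM_apply, dz_dzbar,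
    Function.comp_apply, map_add, Complex.star_def]
  ring

theorem exists_remainder_bounds {P : PolarMonomial} (hq : P.q ≠ 0) (hd : 3 ≤ P.deg) :
    ∃ C : ℝ, 0 < C ∧
      (∀ z w : ℂ, w ≠ 0 → ‖P.remainder z w‖ ≤ C * (‖z‖ ^ P.deg + ‖z‖ ^ 2 * ‖w‖ ^ (P.deg - 2))) ∧
      (∀ z w : ℝ → ℂ, Differentiable ℝ z → Differentiable ℝ w → (∀ x, w x ≠ 0) → ∀ x : ℝ,
        ‖deriv (fun y => P.remainder (z y) (w y)) x‖ ≤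
          C * (‖z x‖ ^ (P.deg - 1) + ‖z x‖ * ‖w x‖ ^ (P.deg - 2)) * ‖deriv z x‖
          + C * (‖z x‖ ^ P.deg * ‖w x‖ ^ (-1 : ℝ) + ‖z x‖ ^ 2 * ‖w x‖ ^ (P.deg - 3))
            * ‖deriv w x‖) := by
  obtain ⟨K₁, hK₁, h₁⟩ := exists_norm_remainder_le hq (by linarith)
  obtain ⟨K₂, hK₂, h₂⟩ := exists_norm_fderiv_sub_le hq (by linarith)
  obtain ⟨K₃, hK₃, h₃⟩ := exists_norm_remainder_dz_add_le hq hd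
  refine ⟨K₁ + K₂ + K₃ + 1, by positivity,
    fun z w hw => (h₁ z w hw).trans (by gcongr; linarith), fun z w hz hw hw0 x => ?_⟩
  rw [(P.hasDerivAt_remainder_comp (hz x).hasDerivAt (hw x).hasDerivAt (hw0 x)
    (hasFDerivAt_of_one_lt_deg hq (by linarith) _)).deriv]
  refine (norm_add_le _ _).trans (add_le_add ?_ ?_)
  · refine ((P.fderiv (z x + w x) - P.fderiv (w x)).le_of_opNorm_le ?_ _)
    exact (h₂ _ _ (hw0 x)).trans (by gcongr; linarith)
  · refine (wirtingerCLM _ _).le_of_opNorm_le ?_ _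
    exact (norm_wirtingerCLM_le _ _).trans ((h₃ _ _ (hw0 x)).trans (by gcongr; linarith))

end PolarMonomial

def nlsPower (σ : ℝ) : PolarMonomial := ⟨1, 2 * σ, 1, 0⟩

lemma nlsPower_deg (σ : ℝ) : (nlsPower σ).deg = 2 * σ + 1 := by
  simp [nlsPower, PolarMonomial.deg]

lemma Fnl_eq_neg_remainder (σ : ℝ) (z : ℂ) {w : ℂ} (hw : w ≠ 0) :
    Fnl σ z w = -(nlsPower σ).remainder z w := by
  have key := PolarMonomial.ofReal_norm_rpow_sub_two_mul_mul_conj (2 * σ) hw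
  have hw' : conj w ≠ 0 := by simpa using hw
  simp only [Fnl, PolarMonomial.remainder, PolarMonomial.fderiv, PolarMonomial.dz,
    PolarMonomial.dzbar, PolarMonomial.apply, nlsPower, wirtingerCLM_apply, sub_self, zero_sub,
    zpow_zero, zpow_neg, zpow_one]
  rw [← key]
  field_simp
  push_cast
  ring

theorem stmt_2 (σ : ℝ) (hσ : 1 ≤ σ) :
    ∃ C : ℝ, 0 < C ∧
      (∀ z w : ℂ, w ≠ 0 →
        ‖Fnl σ z w‖ ≤
          C * (‖z‖ ^ (2 * σ + 1)
            + ‖z‖ ^ 2 * ‖w‖ ^ (2 * σ - 1))) ∧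
      (∀ z w : ℝ → ℂ, Differentiable ℝ z → Differentiable ℝ w → (∀ x, w x ≠ 0) →
        ∀ x : ℝ,
          ‖deriv (fun y => Fnl σ (z y) (w y)) x‖ ≤
            C * (‖z x‖ ^ (2 * σ)
                + ‖z x‖ * ‖w x‖ ^ (2 * σ - 1))
              * ‖deriv z x‖
            + C * (‖z x‖ ^ (2 * σ + 1) * ‖w x‖ ^ (-(1:ℝ))
                + ‖z x‖ ^ 2 * ‖w x‖ ^ (2 * σ - 2))
              * ‖deriv w x‖) := by
  obtain ⟨C, hC, h₁, h₂⟩ := PolarMonomial.exists_remainder_bounds (P := nlsPower σ)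
    (by simp [nlsPower]; linarith) (by rw [nlsPower_deg]; linarith)
  simp only [nlsPower_deg, add_sub_cancel_right, show 2 * σ + 1 - 2 = 2 * σ - 1 by ring,
    show 2 * σ + 1 - 3 = 2 * σ - 2 by ring] at h₁ h₂
  refine ⟨C, hC, fun z w hw => ?_, fun z w hz hw hw0 x => ?_⟩
  · rw [Fnl_eq_neg_remainder σ z hw, norm_neg]
    exact h₁ z w hw
  · have hF : (fun y => Fnl σ (z y) (w y)) = fun y => -(nlsPower σ).remainder (z y) (w y) :=
      funext fun y => Fnl_eq_neg_remainder σ (z y) (hw0 y)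
    rw [hF, deriv.fun_neg, norm_neg]
    exact h₂ z w hz hw hw0 x
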